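/- arXiv:0806.3534 — 4 statements merged into one kernel-verified Lean document; each statement's English description precedes it below -/
import Mathlib

section
/- Let n > 2 and fix signs ε₁,…,ε_{n+1} ∈ {+1,−1}. The alternating n-linear bracket on ℝ^{n+1} defined on the standard basis by [e₁,…,ê_i,…,e_{n+1}] = (−1)^i ε_i e_i (hat denoting omission) satisfies the n-Jacobi identity, and the diagonal symmetric bilinear form b(e_i,e_j) = ε_i δ_{ij} is nondegenerate and invariant, i.e. b([x₁,…,x_{n−1},y₁],y₂) = −b([x₁,…,x_{n−1},y₂],y₁) for all arguments. In particular this simple real Lie n-algebra admits an invariant inner product of signature determined by the signs ε_i. -/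
/-!
Up to the signs `εᵢ`, the bracket `Φ x` is the `b`-dual of the linear form
`w ↦ -det (w, x₁, …, xₙ)`, so `b (Φ x) w = -det (w, x)` and the invariance of `b` is the
antisymmetry of `det` in two rows. For the Jacobi identity, `A = [x₁, …, x_{n-1}, ·]` is
`b`-skew by invariance, hence traceless, and dualizing the identity
`Σᵣ det (v₁, …, A vᵣ, …, v_{n+1}) = tr A · det v = 0` with `b` says that `A` is a derivation
of the bracket.
-/

open scoped BigOperators

section NLiePreamble

variable {n : ℕ} {V : Type*} [AddCommGroup V] [Module ℝ V]

def IsNJacobi (Φ : V [⋀^Fin n]→ₗ[ℝ] V) : Prop :=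
  ∀ (x : Fin n → V) (i : Fin n) (y : Fin n → V),
    Φ (Function.update x i (Φ y)) =
      ∑ j : Fin n, Φ (Function.update y j (Φ (Function.update x i (y j))))

def IsIdealN (Φ : V [⋀^Fin n]→ₗ[ℝ] V) (I : Submodule ℝ V) : Prop :=
  ∀ (y : Fin n → V) (i : Fin n), y i ∈ I → Φ y ∈ I

def IsSubalgebraN (Φ : V [⋀^Fin n]→ₗ[ℝ] V) (W : Submodule ℝ V) : Prop :=
  ∀ y : Fin n → V, (∀ i, y i ∈ W) → Φ y ∈ W

def IsSimpleN (Φ : V [⋀^Fin n]→ₗ[ℝ] V) : Prop :=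
  1 < Module.finrank ℝ V ∧ ∀ I : Submodule ℝ V, IsIdealN Φ I → I = ⊥ ∨ I = ⊤

def bracketSpanN (Φ : V [⋀^Fin n]→ₗ[ℝ] V) (W : Submodule ℝ V) : Submodule ℝ V :=
  Submodule.span ℝ {z | ∃ y : Fin n → V, (∀ i, y i ∈ W) ∧ Φ y = z}

def derivedSeriesN (Φ : V [⋀^Fin n]→ₗ[ℝ] V) (I : Submodule ℝ V) : ℕ → Submodule ℝ V
  | 0 => I
  | (k+1) => bracketSpanN Φ (derivedSeriesN Φ I k)

def IsSolvableN (Φ : V [⋀^Fin n]→ₗ[ℝ] V) (I : Submodule ℝ V) : Prop :=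
  ∃ s, derivedSeriesN Φ I s = ⊥

def IsRadicalN (Φ : V [⋀^Fin n]→ₗ[ℝ] V) (R : Submodule ℝ V) : Prop :=
  IsIdealN Φ R ∧ IsSolvableN Φ R ∧
    ∀ I : Submodule ℝ V, IsIdealN Φ I → IsSolvableN Φ I → I ≤ R

def IsSemisimpleN (Φ : V [⋀^Fin n]→ₗ[ℝ] V) : Prop :=
  ∀ I : Submodule ℝ V, IsIdealN Φ I → IsSolvableN Φ I → I = ⊥

def IsDerivationN (Φ : V [⋀^Fin n]→ₗ[ℝ] V) (D : V →ₗ[ℝ] V) : Prop :=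
  ∀ y : Fin n → V, D (Φ y) = ∑ i : Fin n, Φ (Function.update y i (D (y i)))

def adMapN (Φ : V [⋀^Fin n]→ₗ[ℝ] V) (x : Fin n → V) (i : Fin n) : V →ₗ[ℝ] V where
  toFun z := Φ (Function.update x i z)
  map_add' a b := by simp
  map_smul' c a := by simp

def centerN (Φ : V [⋀^Fin n]→ₗ[ℝ] V) : Submodule ℝ V where
  carrier := {z | ∀ (y : Fin n → V) (i : Fin n), Φ (Function.update y i z) = 0}
  add_mem' := by
    intro a b ha hb y i
    simp [ha y i, hb y i]
  zero_mem' := by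
    intro y i
    simp
  smul_mem' := by
    intro c a ha y i
    simp [ha y i]

def IsInvariantN (Φ : V [⋀^Fin n]→ₗ[ℝ] V) (b : LinearMap.BilinForm ℝ V) : Prop :=
  ∀ (x : Fin n → V) (i : Fin n) (y₁ y₂ : V),
    b (Φ (Function.update x i y₁)) y₂ = - b (Φ (Function.update x i y₂)) y₁

def perpN (b : LinearMap.BilinForm ℝ V) (W : Submodule ℝ V) : Submodule ℝ V where
  carrier := {v | ∀ w ∈ W, b v w = 0}
  add_mem' := by
    intro a c ha hc w hw
    simp [ha w hw, hc w hw]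
  zero_mem' := by
    intro w hw
    simp
  smul_mem' := by
    intro r a ha w hw
    simp [ha w hw]

def IsNondegN (b : LinearMap.BilinForm ℝ V) : Prop :=
  ∀ v : V, (∀ w : V, b v w = 0) → v = 0

def IsSymmN (b : LinearMap.BilinForm ℝ V) : Prop := ∀ v w : V, b v w = b w v

def IsDecomposableN (Φ : V [⋀^Fin n]→ₗ[ℝ] V) (b : LinearMap.BilinForm ℝ V) : Prop :=
  ∃ W₁ W₂ : Submodule ℝ V, W₁ ≠ ⊥ ∧ W₂ ≠ ⊥ ∧ IsCompl W₁ W₂ ∧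
    IsSubalgebraN Φ W₁ ∧ IsSubalgebraN Φ W₂ ∧
    (∀ v ∈ W₁, ∀ w ∈ W₂, b v w = 0) ∧
    (∀ (y : Fin n → V) (i j : Fin n), i ≠ j → y i ∈ W₁ → y j ∈ W₂ → Φ y = 0)

def IsIndecomposableN (Φ : V [⋀^Fin n]→ₗ[ℝ] V) (b : LinearMap.BilinForm ℝ V) : Prop :=
  0 < Module.finrank ℝ V ∧ ¬ IsDecomposableN Φ b

end NLiePreamble

open Matrix Function

theorem Matrix.sum_det_updateRow_mulVec {ι R : Type*} [Fintype ι] [DecidableEq ι] [CommRing R]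
    (V M : Matrix ι ι R) : ∑ r, (V.updateRow r (M *ᵥ V r)).det = M.trace * V.det := by
  -- Cramer's rule: replacing row `r` of `V` by `w` gives the determinant `(adj Vᵀ *ᵥ w) r`.
  simp_rw [← cramer_transpose_apply, cramer_eq_adjugate_mulVec, mulVec_mulVec]
  calc ∑ r, ((adjugate Vᵀ * M) *ᵥ V r) r = (adjugate Vᵀ * M * Vᵀ).trace := by
        simp [trace, mul_apply, mulVec, dotProduct]
    _ = M.trace * V.det := by
        rw [trace_mul_comm, ← Matrix.mul_assoc, mul_adjugate, det_transpose, smul_mul,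
          Matrix.one_mul, trace_smul, smul_eq_mul, mul_comm]

theorem AlternatingMap.map_cons_update_swap {R M N : Type*} [CommRing R] [AddCommGroup M]
    [Module R M] [AddCommGroup N] [Module R N] {n : ℕ} (f : M [⋀^Fin (n + 1)]→ₗ[R] N)
    (a b : M) (x : Fin n → M) (k : Fin n) :
    f (Fin.cons a (update x k b)) = -f (Fin.cons b (update x k a)) := by
  have hswap : (Fin.cons b (update x k a) : Fin (n + 1) → M) ∘ Equiv.swap 0 k.succ =
      Fin.cons a (update x k b) := by
    ext r
    refine Fin.cases ?_ (fun j => ?_) r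
    · simp
    · rcases eq_or_ne j k with rfl | hjk
      · simp [update_of_ne (Fin.succ_ne_zero j).symm]
      · have hjk' : j.succ ≠ k.succ := (Fin.succ_injective _).ne hjk
        simp [Equiv.swap_apply_of_ne_of_ne (Fin.succ_ne_zero j) hjk', hjk]
  rw [← hswap, f.map_swap _ (Fin.succ_ne_zero k).symm]

variable {R : Type*} [CommRing R]

section DiagForm

variable {ι : Type*} [Fintype ι]

def diagForm (ε : ι → R) : LinearMap.BilinForm R (ι → R) :=
  LinearMap.mk₂ R (fun v w => ∑ i, ε i * v i * w i)
    (fun _ _ _ => by simp only [Pi.add_apply, mul_add, add_mul, Finset.sum_add_distrib])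
    (fun _ _ _ => by
      simp only [Pi.smul_apply, smul_eq_mul, Finset.mul_sum]
      exact Finset.sum_congr rfl fun _ _ => by ring)
    (fun _ _ _ => by simp only [Pi.add_apply, mul_add, Finset.sum_add_distrib])
    (fun _ _ _ => by
      simp only [Pi.smul_apply, smul_eq_mul, Finset.mul_sum]
      exact Finset.sum_congr rfl fun _ _ => by ring)

variable (ε : ι → R)

theorem diagForm_apply (v w : ι → R) : diagForm ε v w = ∑ i, ε i * v i * w i := rfl

theorem diagForm_comm (v w : ι → R) : diagForm ε v w = diagForm ε w v :=
  Finset.sum_congr rfl fun _ _ => by ring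

theorem diagForm_single_right [DecidableEq ι] (v : ι → R) (j : ι) :
    diagForm ε v (Pi.single j 1) = ε j * v j := by
  simp [diagForm_apply, Pi.single_apply]

variable {ε}

theorem eq_zero_of_forall_diagForm_eq_zero (hε : ∀ i, ε i * ε i = 1) {v : ι → R}
    (hv : ∀ w, diagForm ε v w = 0) : v = 0 := by
  classical
  funext j
  calc v j = ε j * (ε j * v j) := by rw [← mul_assoc, hε, one_mul]
    _ = 0 := by rw [← diagForm_single_right, hv, mul_zero]

theorem trace_toMatrix'_eq_zero_of_diagForm_skew [DecidableEq ι] [IsAddTorsionFree R]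
    (hε : ∀ i, ε i * ε i = 1) {A : (ι → R) →ₗ[R] (ι → R)}
    (hA : ∀ v w, diagForm ε (A v) w = -diagForm ε (A w) v) :
    (LinearMap.toMatrix' A).trace = 0 := by
  refine Finset.sum_eq_zero fun p _ => ?_
  have hpp := hA (Pi.single p 1) (Pi.single p 1)
  rw [diagForm_single_right, self_eq_neg] at hpp
  rw [Matrix.diag_apply, LinearMap.toMatrix'_apply]
  calc A (Pi.single p 1) p = ε p * (ε p * A (Pi.single p 1) p) := by
        rw [← mul_assoc, hε, one_mul]
    _ = 0 := by rw [hpp, mul_zero]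

end DiagForm

section CrossBracket

variable {n : ℕ} (ε : Fin (n + 1) → R)

def crossBracket : (Fin (n + 1) → R) [⋀^Fin n]→ₗ[R] (Fin (n + 1) → R) :=
  AlternatingMap.pi fun i => ((-1) ^ ((i : ℕ) + 1) * ε i) •
    detRowAlternating.compLinearMap (LinearMap.funLeft R R i.succAbove)

theorem crossBracket_apply (x : Fin n → Fin (n + 1) → R) (i : Fin (n + 1)) :
    crossBracket ε x i = (-1) ^ ((i : ℕ) + 1) * ε i * ((of x).submatrix id i.succAbove).det :=
  rfl

theorem crossBracket_single_succAbove (i : Fin (n + 1)) :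
    crossBracket ε (fun j => Pi.single (i.succAbove j) 1) =
      ((-1) ^ ((i : ℕ) + 1) * ε i) • Pi.single i 1 := by
  have hx : of (fun j => (Pi.single (i.succAbove j) 1 : Fin (n + 1) → R)) =
      (1 : Matrix (Fin (n + 1)) (Fin (n + 1)) R).submatrix i.succAbove id := by
    ext j k
    simp [one_eq_pi_single]
  ext p
  rw [crossBracket_apply, hx, submatrix_submatrix]
  rcases eq_or_ne p i with rfl | hpi
  · simp [submatrix_one _ Fin.succAbove_right_injective]
  · obtain ⟨j, rfl⟩ := Fin.exists_succAbove_eq hpi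
    rw [det_eq_zero_of_row_eq_zero j fun k => by simp [one_apply_ne (Fin.succAbove_ne _ k).symm]]
    simp [hpi]

variable {ε}

theorem diagForm_crossBracket (hε : ∀ i, ε i * ε i = 1) (x : Fin n → Fin (n + 1) → R)
    (w : Fin (n + 1) → R) : diagForm ε (crossBracket ε x) w = -(of (Fin.cons w x)).det := by
  rw [diagForm_apply, det_succ_row_zero, ← Finset.sum_neg_distrib]
  refine Finset.sum_congr rfl fun i _ => ?_
  have hminor :
      (of (Fin.cons w x)).submatrix Fin.succ i.succAbove = (of x).submatrix id i.succAbove := by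
    ext; simp
  rw [crossBracket_apply, hminor, of_apply, Fin.cons_zero]
  linear_combination (-(-1) ^ (i : ℕ) * w i * ((of x).submatrix id i.succAbove).det) * hε i

theorem diagForm_crossBracket_update_skew (hε : ∀ i, ε i * ε i = 1)
    (x : Fin n → Fin (n + 1) → R) (k : Fin n) (y₁ y₂ : Fin (n + 1) → R) :
    diagForm ε (crossBracket ε (update x k y₁)) y₂ =
      -diagForm ε (crossBracket ε (update x k y₂)) y₁ := by
  rw [diagForm_crossBracket hε, diagForm_crossBracket hε, neg_neg, neg_eq_iff_eq_neg]
  exact detRowAlternating.map_cons_update_swap y₂ y₁ x k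

theorem apply_crossBracket_of_diagForm_skew [IsAddTorsionFree R] (hε : ∀ i, ε i * ε i = 1)
    {A : (Fin (n + 1) → R) →ₗ[R] (Fin (n + 1) → R)}
    (hA : ∀ v w, diagForm ε (A v) w = -diagForm ε (A w) v) (y : Fin n → Fin (n + 1) → R) :
    A (crossBracket ε y) = ∑ k, crossBracket ε (update y k (A (y k))) := by
  refine sub_eq_zero.mp (eq_zero_of_forall_diagForm_eq_zero hε fun w => ?_)
  set v : Fin (n + 1) → Fin (n + 1) → R := Fin.cons w y with hv
  have htrace : ∑ r, (of (update v r (A (v r)))).det = 0 := by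
    have := sum_det_updateRow_mulVec (of v) (LinearMap.toMatrix' A)
    rw [trace_toMatrix'_eq_zero_of_diagForm_skew hε hA, zero_mul] at this
    simp only [LinearMap.toMatrix'_mulVec] at this
    exact this
  simp only [hv, Fin.sum_univ_succ, Fin.cons_zero, Fin.update_cons_zero, Fin.cons_succ,
    ← Fin.cons_update] at htrace
  rw [map_sub, LinearMap.sub_apply, map_sum, LinearMap.sum_apply, hA, diagForm_comm]
  simp only [diagForm_crossBracket hε, Finset.sum_neg_distrib]
  linear_combination htrace

end CrossBracket

theorem simple_nLie_bracket_jacobi_and_invariant_form_general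
    (n : ℕ) (ε : Fin (n + 1) → ℝ) (hε : ∀ i, ε i = 1 ∨ ε i = -1) :
    ∃ Φ : (Fin (n + 1) → ℝ) [⋀^Fin n]→ₗ[ℝ] (Fin (n + 1) → ℝ),
      (∀ i : Fin (n + 1),
        Φ (fun j => (Pi.single (i.succAbove j) (1 : ℝ) : Fin (n + 1) → ℝ)) =
          ((-1 : ℝ) ^ ((i : ℕ) + 1) * ε i) • (Pi.single i (1 : ℝ) : Fin (n + 1) → ℝ)) ∧
      IsNJacobi Φ ∧
      (∀ v w : Fin (n + 1) → ℝ,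
        (∑ i, ε i * v i * w i) = ∑ i, ε i * w i * v i) ∧
      (∀ v : Fin (n + 1) → ℝ, (∀ w : Fin (n + 1) → ℝ, (∑ i, ε i * v i * w i) = 0) → v = 0) ∧
      (∀ (x : Fin n → (Fin (n + 1) → ℝ)) (k : Fin n) (y₁ y₂ : Fin (n + 1) → ℝ),
        (∑ i, ε i * Φ (Function.update x k y₁) i * y₂ i) =
          - ∑ i, ε i * Φ (Function.update x k y₂) i * y₁ i) := by
  have hε2 : ∀ i, ε i * ε i = 1 := fun i => by rcases hε i with h | h <;> simp [h]
  have hskew := diagForm_crossBracket_update_skew hε2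
  refine ⟨crossBracket ε, crossBracket_single_succAbove ε, ?_, diagForm_comm ε,
    fun _ => eq_zero_of_forall_diagForm_eq_zero hε2, hskew⟩
  exact fun x i => apply_crossBracket_of_diagForm_skew (A := adMapN (crossBracket ε) x i) hε2
    (hskew x i)

/-- for `n > 2` and signs `ε i ∈ {+1,-1}`, the alternating `n`-linear
bracket on `ℝ^{n+1}` defined on the standard basis by
`[e₁,…,êᵢ,…,e_{n+1}] = (−1)ⁱ εᵢ eᵢ` (0-based indices, sign `(−1)^{i+1}`)
satisfies the `n`-Jacobi identity, and the diagonal bilinear form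
`b(v,w) = Σᵢ εᵢ vᵢ wᵢ` is symmetric, nondegenerate and invariant. -/
theorem simple_nLie_bracket_jacobi_and_invariant_form
    (n : ℕ) (hn : 2 < n) (ε : Fin (n + 1) → ℝ) (hε : ∀ i, ε i = 1 ∨ ε i = -1) :
    ∃ Φ : (Fin (n + 1) → ℝ) [⋀^Fin n]→ₗ[ℝ] (Fin (n + 1) → ℝ),
      (∀ i : Fin (n + 1),
        Φ (fun j => (Pi.single (i.succAbove j) (1 : ℝ) : Fin (n + 1) → ℝ)) =
          ((-1 : ℝ) ^ ((i : ℕ) + 1) * ε i) • (Pi.single i (1 : ℝ) : Fin (n + 1) → ℝ)) ∧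
      IsNJacobi Φ ∧
      (∀ v w : Fin (n + 1) → ℝ,
        (∑ i, ε i * v i * w i) = ∑ i, ε i * w i * v i) ∧
      (∀ v : Fin (n + 1) → ℝ, (∀ w : Fin (n + 1) → ℝ, (∑ i, ε i * v i * w i) = 0) → v = 0) ∧
      (∀ (x : Fin n → (Fin (n + 1) → ℝ)) (k : Fin n) (y₁ y₂ : Fin (n + 1) → ℝ),
        (∑ i, ε i * Φ (Function.update x k y₁) i * y₂ i) =
          - ∑ i, ε i * Φ (Function.update x k y₂) i * y₁ i) :=
  simple_nLie_bracket_jacobi_and_invariant_form_general n ε hε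
end

section
/- Let n > 2 and let V be a finite-dimensional real Lie n-algebra with radical Rad V (its maximal solvable ideal). Then D(Rad V) ⊆ Rad V for every derivation D of V. -/
open scoped BigOperators

/-! A derivation `D` integrates to the one-parameter group `exp (t • D)` of automorphisms of the
bracket: `u ↦ exp (-u • D) (Φ (exp (u • D) ∘ y))` has zero derivative. Automorphisms carry solvable
ideals to solvable ideals, so each `exp (t • D)` maps the radical `R` into itself. Hence the curve
`t ↦ exp (t • D) v` stays in the closed subspace `R` for `v ∈ R`, and so does its velocity `D v`
at `t = 0`. -/

section Calculus

variable {𝕜 : Type*} [NontriviallyNormedField 𝕜]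

theorem MultilinearMap.continuous_of_finiteDimensional [CompleteSpace 𝕜]
    {ι : Type*} [Fintype ι] [DecidableEq ι] {E : ι → Type*}
    [∀ i, NormedAddCommGroup (E i)] [∀ i, NormedSpace 𝕜 (E i)] [∀ i, FiniteDimensional 𝕜 (E i)]
    {F : Type*} [AddCommGroup F] [Module 𝕜 F] [TopologicalSpace F] [ContinuousAdd F]
    [ContinuousSMul 𝕜 F] (f : MultilinearMap 𝕜 E F) :
    Continuous f := by
  let b := fun i => Module.finBasis 𝕜 (E i)
  have hf : ⇑f = fun m => ∑ r : ∀ i, Fin (Module.finrank 𝕜 (E i)),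
      (∏ i, (b i).coord (r i) (m i)) • f fun i => b i (r i) := by
    funext m
    conv_lhs => rw [← funext fun i => (b i).sum_repr (m i)]
    rw [f.map_sum]
    exact Finset.sum_congr rfl fun r _ => f.map_smul_univ _ _
  rw [hf]
  refine continuous_finsetSum _ fun r _ => .smul ?_ continuous_const
  exact continuous_finsetProd _ fun i _ =>
    ((b i).coord (r i)).continuous_of_finiteDimensional.comp (continuous_apply i)

theorem Submodule.mem_of_hasDerivAt {E : Type*} [NormedAddCommGroup E] [NormedSpace 𝕜 E]
    {K : Submodule 𝕜 E} (hK : IsClosed (K : Set E)) {f : 𝕜 → E} {f' : E} {x : 𝕜}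
    (hf : HasDerivAt f f' x) (hfK : ∀ t, f t ∈ K) : f' ∈ K := by
  have hspan : Submodule.span 𝕜 (f '' Set.univ) ≤ K :=
    Submodule.span_le.mpr <| by rintro _ ⟨t, -, rfl⟩; exact hfK t
  rw [← hf.deriv]
  exact closure_minimal hspan hK <|
    range_deriv_subset_closure_span_image f dense_univ (Set.mem_range_self x)

end Calculus

section Exponential

open NormedSpace

variable {𝕂 V : Type*} [RCLike 𝕂] [NormedAddCommGroup V] [NormedSpace 𝕂 V] [CompleteSpace V]

theorem exp_smul_apply_exp_neg_smul_apply (D : V →L[𝕂] V) (t : 𝕂) (v : V) :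
    exp (t • D) (exp (-t • D) v) = v := by
  have hball : ∀ x : V →L[𝕂] V, x ∈ Metric.eball 0 (expSeries 𝕂 (V →L[𝕂] V)).radius :=
    fun x => (expSeries_radius_eq_top 𝕂 (V →L[𝕂] V)).symm ▸ edist_lt_top _ _
  rw [← mul_apply_eq_comp, ← exp_add_of_commute_of_mem_ball
    (((Commute.refl D).smul_left t).smul_right (-t)) (hball _) (hball _), ← add_smul,
    add_neg_cancel, zero_smul, exp_zero, one_apply_eq_self]

theorem hasDerivAt_exp_smul_apply (D : V →L[𝕂] V) (v : V) (t : 𝕂) :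
    HasDerivAt (fun s : 𝕂 => exp (s • D) v) (D (exp (t • D) v)) t := by
  simpa using (hasDerivAt_exp_smul_const' D t).clm_apply (hasDerivAt_const t v)

variable {ι : Type*} [Fintype ι] [DecidableEq ι]

theorem ContinuousMultilinearMap.map_exp_smul_of_derivation
    (Φ : ContinuousMultilinearMap 𝕂 (fun _ : ι => V) V) (D : V →L[𝕂] V)
    (hD : ∀ y, D (Φ y) = ∑ i, Φ (Function.update y i (D (y i)))) (t : 𝕂) (y : ι → V) :
    Φ (fun i => exp (t • D) (y i)) = exp (t • D) (Φ y) := by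
  have hconj (s : 𝕂) :
      HasDerivAt (fun u : 𝕂 => exp (-u • D) (Φ fun i => exp (u • D) (y i))) 0 s := by
    have hcurve : HasDerivAt (fun (u : 𝕂) i => exp (u • D) (y i))
        (fun i => D (exp (s • D) (y i))) s :=
      hasDerivAt_pi.mpr fun i => hasDerivAt_exp_smul_apply D (y i) s
    have hinner := (Φ.hasFDerivAt _).comp_hasDerivAt s hcurve
    have houter : HasDerivAt (fun u : 𝕂 => exp (-u • D)) (exp (-s • D) * -D) s := by
      simpa only [neg_smul, smul_neg] using hasDerivAt_exp_smul_const (-D) s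
    -- the two terms of the product rule cancel because `D` is a derivation
    refine (houter.clm_apply hinner).congr_deriv ?_
    rw [linearDeriv_apply, ← hD]
    simp
  have hconst := is_const_of_deriv_eq_zero (fun u => (hconj u).differentiableAt)
    (fun u => (hconj u).deriv) t 0
  simp only [neg_zero, zero_smul, exp_zero, one_apply_eq_self] at hconst
  rw [← hconst, exp_smul_apply_exp_neg_smul_apply]

end Exponential

section Radical

variable {n : ℕ} {V : Type*} [AddCommGroup V] [Module ℝ V] {Φ : V [⋀^Fin n]→ₗ[ℝ] V}

def IsEndomorphismN (Φ : V [⋀^Fin n]→ₗ[ℝ] V) (g : V →ₗ[ℝ] V) : Prop :=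
  ∀ y : Fin n → V, Φ (fun i => g (y i)) = g (Φ y)

theorem bracketSpanN_mono {W W' : Submodule ℝ V} (h : W ≤ W') :
    bracketSpanN Φ W ≤ bracketSpanN Φ W' :=
  Submodule.span_mono <| by
    rintro _ ⟨y, hy, rfl⟩
    exact ⟨y, fun i => h (hy i), rfl⟩

theorem bracketSpanN_map_le {g : V →ₗ[ℝ] V} (hg : IsEndomorphismN Φ g)
    (W : Submodule ℝ V) : bracketSpanN Φ (W.map g) ≤ (bracketSpanN Φ W).map g := by
  rw [bracketSpanN, Submodule.span_le]
  rintro _ ⟨y, hy, rfl⟩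
  choose x hxW hxy using fun i => Submodule.mem_map.mp (hy i)
  refine ⟨Φ x, Submodule.subset_span ⟨x, hxW, rfl⟩, ?_⟩
  rw [← hg, funext hxy]

theorem derivedSeriesN_map_le {g : V →ₗ[ℝ] V} (hg : IsEndomorphismN Φ g) (I : Submodule ℝ V) :
    ∀ k, derivedSeriesN Φ (I.map g) k ≤ (derivedSeriesN Φ I k).map g
  | 0 => le_rfl
  | k + 1 => (bracketSpanN_mono (derivedSeriesN_map_le hg I k)).trans (bracketSpanN_map_le hg _)

theorem IsSolvableN.map {g : V →ₗ[ℝ] V} (hg : IsEndomorphismN Φ g) {I : Submodule ℝ V}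
    (hI : IsSolvableN Φ I) : IsSolvableN Φ (I.map g) := by
  obtain ⟨s, hs⟩ := hI
  refine ⟨s, le_bot_iff.mp ?_⟩
  simpa [hs] using derivedSeriesN_map_le hg I s

theorem IsIdealN.map_of_surjective {g : V →ₗ[ℝ] V} (hg : IsEndomorphismN Φ g)
    (hsurj : Function.Surjective g) {I : Submodule ℝ V} (hI : IsIdealN Φ I) :
    IsIdealN Φ (I.map g) := by
  intro y i hyi
  obtain ⟨r, hrI, hr⟩ := Submodule.mem_map.mp hyi
  choose x hx using fun j => hsurj (y j)
  have hy : y = fun j => g (Function.update x i r j) := by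
    funext j
    rcases eq_or_ne j i with rfl | hji
    · simp [hr]
    · simp [hji, hx]
  rw [hy, hg]
  exact Submodule.mem_map_of_mem (hI _ i (by simpa using hrI))

theorem IsRadicalN.map_le {R : Submodule ℝ V} (hR : IsRadicalN Φ R) {g : V →ₗ[ℝ] V}
    (hg : IsEndomorphismN Φ g) (hsurj : Function.Surjective g) : R.map g ≤ R :=
  hR.2.2 _ (hR.1.map_of_surjective hg hsurj) (hR.2.1.map hg)

end Radical

open NormedSpace in
theorem IsRadicalN.apply_mem_of_isDerivationN {n : ℕ} {V : Type*} [NormedAddCommGroup V]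
    [NormedSpace ℝ V] [FiniteDimensional ℝ V] {Φ : V [⋀^Fin n]→ₗ[ℝ] V} {R : Submodule ℝ V}
    (hR : IsRadicalN Φ R) {D : V →ₗ[ℝ] V} (hD : IsDerivationN Φ D) {v : V} (hv : v ∈ R) :
    D v ∈ R := by
  have : CompleteSpace V := FiniteDimensional.complete ℝ V
  let Φc : ContinuousMultilinearMap ℝ (fun _ : Fin n => V) V :=
    ⟨Φ.toMultilinearMap, Φ.toMultilinearMap.continuous_of_finiteDimensional⟩
  let Dc := LinearMap.toContinuousLinearMap D
  have hflow (t : ℝ) : R.map (exp (t • Dc)).toLinearMap ≤ R :=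
    hR.map_le (fun y => Φc.map_exp_smul_of_derivation Dc hD t y)
      fun w => ⟨exp (-t • Dc) w, exp_smul_apply_exp_neg_smul_apply Dc t w⟩
  have h := hasDerivAt_exp_smul_apply Dc v 0
  rw [zero_smul, exp_zero, one_apply_eq_self] at h
  exact Submodule.mem_of_hasDerivAt R.closed_of_finiteDimensional h
    fun t => hflow t (Submodule.mem_map_of_mem hv)

theorem derivation_preserves_radical_general
    (n : ℕ) (V : Type*) [AddCommGroup V] [Module ℝ V]
    [FiniteDimensional ℝ V]
    (Φ : V [⋀^Fin n]→ₗ[ℝ] V)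
    (R : Submodule ℝ V) (hR : IsRadicalN Φ R)
    (D : V →ₗ[ℝ] V) (hD : IsDerivationN Φ D) :
    ∀ v ∈ R, D v ∈ R := by
  -- any norm will do; it only serves to define `exp (t • D)`
  let e := (Module.finBasis ℝ V).equivFun
  let : NormedAddCommGroup V := NormedAddCommGroup.induced V _ e.toLinearMap e.injective
  let : NormedSpace ℝ V := NormedSpace.induced ℝ V _ e.toLinearMap
  exact fun v hv => hR.apply_mem_of_isDerivationN hD hv

/-- the radical of a finite-dimensional real Lie `n`-algebra (`n > 2`)
is preserved by every derivation. -/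
theorem derivation_preserves_radical
    (n : ℕ) (hn : 2 < n) (V : Type*) [AddCommGroup V] [Module ℝ V]
    [FiniteDimensional ℝ V]
    (Φ : V [⋀^Fin n]→ₗ[ℝ] V) (hΦ : IsNJacobi Φ)
    (R : Submodule ℝ V) (hR : IsRadicalN Φ R)
    (D : V →ₗ[ℝ] V) (hD : IsDerivationN Φ D) :
    ∀ v ∈ R, D v ∈ R :=
  derivation_preserves_radical_general n V Φ R hR D hD
end

section
/- Let n > 2 and let V be a metric Lie n-algebra. If I ⊴ V is a coisotropic ideal (I^⊥ ⊆ I), then the quotient I/I^⊥ is a metric Lie n-algebra: the n-bracket of V induces a well-defined n-bracket on I/I^⊥ satisfying the n-Jacobi identity, and the inner product of V induces a well-defined nondegenerate invariant symmetric bilinear form on I/I^⊥. -/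
open scoped BigOperators

/-!
Restricting the bracket and the form of `V` to the ideal `I` gives an `n`-bracket on `I` satisfying
the `n`-Jacobi identity and an invariant symmetric form whose kernel is `I ∩ I^⊥`. Invariance makes
the kernel of an invariant symmetric form an ideal, and multilinearity lets a bracket descend to the
quotient by any ideal. On the quotient the form becomes nondegenerate, and the Jacobi identity and
invariance descend along the surjective quotient map.
-/

open Function

section NLieMorphisms

variable {n : ℕ} {W V : Type*} [AddCommGroup W] [Module ℝ W] [AddCommGroup V] [Module ℝ V]
  {Ψ : W [⋀^Fin n]→ₗ[ℝ] W} {Φ : V [⋀^Fin n]→ₗ[ℝ] V} {f : W →ₗ[ℝ] V}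

theorem IsNJacobi.of_injective (hΦ : IsNJacobi Φ) (hf : Injective f)
    (hfΨ : ∀ y, f (Ψ y) = Φ (f ∘ y)) : IsNJacobi Ψ := by
  intro x i y
  apply hf
  simp only [map_sum, hfΨ, comp_update]
  exact hΦ _ _ _

theorem IsNJacobi.of_surjective (hΨ : IsNJacobi Ψ) (hf : Surjective f)
    (hfΨ : ∀ y, f (Ψ y) = Φ (f ∘ y)) : IsNJacobi Φ := by
  intro x i y
  obtain ⟨x, rfl⟩ := hf.comp_left x
  obtain ⟨y, rfl⟩ := hf.comp_left y
  have h := congrArg f (hΨ x i y)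
  simp only [map_sum, hfΨ, comp_update] at h
  exact h

theorem IsInvariantN.compl₁₂ {b : LinearMap.BilinForm ℝ V} (hinv : IsInvariantN Φ b)
    (hfΨ : ∀ y, f (Ψ y) = Φ (f ∘ y)) : IsInvariantN Ψ (b.compl₁₂ f f) := by
  intro x i y₁ y₂
  simp only [LinearMap.compl₁₂_apply, hfΨ, comp_update]
  exact hinv _ _ _ _

theorem IsInvariantN.of_surjective {β : LinearMap.BilinForm ℝ W} {b : LinearMap.BilinForm ℝ V}
    (hinv : IsInvariantN Ψ β) (hf : Surjective f) (hfΨ : ∀ y, f (Ψ y) = Φ (f ∘ y))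
    (hb : ∀ u v, b (f u) (f v) = β u v) : IsInvariantN Φ b := by
  intro x i y₁ y₂
  obtain ⟨x, rfl⟩ := hf.comp_left x
  obtain ⟨y₁, rfl⟩ := hf y₁
  obtain ⟨y₂, rfl⟩ := hf y₂
  rw [← comp_update, ← comp_update, ← hfΨ, ← hfΨ, hb, hb]
  exact hinv _ _ _ _

end NLieMorphisms

section NLieQuotient

variable {n : ℕ} {W : Type*} [AddCommGroup W] [Module ℝ W] {Ψ : W [⋀^Fin n]→ₗ[ℝ] W}

theorem IsIdealN.sub_mem_of_forall_sub_mem {K : Submodule ℝ W} (hK : IsIdealN Ψ K)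
    {y y' : Fin n → W} (h : ∀ i, y i - y' i ∈ K) : Ψ y - Ψ y' ∈ K := by
  classical
  -- Expand `Ψ ((y - y') + y')`: every term other than `Ψ y'` has an entry in `K`.
  have hexp := Ψ.map_add_univ (y - y') y'
  rw [sub_add_cancel, ← Finset.add_sum_erase _ _ (Finset.mem_univ ∅),
    Finset.piecewise_empty] at hexp
  rw [hexp, add_sub_cancel_left]
  refine K.sum_mem fun t ht => ?_
  obtain ⟨k, hk⟩ := Finset.nonempty_iff_ne_empty.mpr (Finset.ne_of_mem_erase ht)
  exact hK _ k (by rw [Finset.piecewise_eq_of_mem _ _ _ hk]; exact h k)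

theorem IsIdealN.exists_quotient {K : Submodule ℝ W} (hK : IsIdealN Ψ K) :
    ∃ Ψ' : (W ⧸ K) [⋀^Fin n]→ₗ[ℝ] (W ⧸ K), ∀ y, K.mkQ (Ψ y) = Ψ' (K.mkQ ∘ y) := by
  obtain ⟨s, hs⟩ := K.mkQ.exists_rightInverse_of_surjective K.range_mkQ
  refine ⟨K.mkQ.compAlternatingMap (Ψ.compLinearMap s), fun y => ?_⟩
  refine (Submodule.Quotient.eq K).mpr (hK.sub_mem_of_forall_sub_mem fun i => ?_)
  exact (Submodule.Quotient.eq K).mp (LinearMap.congr_fun hs _).symm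

theorem isIdealN_ker {β : LinearMap.BilinForm ℝ W} (hsymm : IsSymmN β)
    (hinv : IsInvariantN Ψ β) : IsIdealN Ψ (LinearMap.ker β) := by
  intro y k hk
  ext w
  have h := hinv y k (y k) w
  rw [update_eq_self, hsymm _ (y k), LinearMap.mem_ker.mp hk] at h
  simpa using h

def quotientKerForm (β : LinearMap.BilinForm ℝ W) (hsymm : IsSymmN β) :
    LinearMap.BilinForm ℝ (W ⧸ LinearMap.ker β) :=
  ((LinearMap.ker β).liftQ ((LinearMap.ker β).liftQ β le_rfl).flip fun v hv =>
    Submodule.linearMap_qext _ <| LinearMap.ext fun u => by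
      simp [hsymm u v, LinearMap.mem_ker.mp hv]).flip

variable {β : LinearMap.BilinForm ℝ W}

@[simp]
theorem quotientKerForm_mk (hsymm : IsSymmN β) (u v : W) :
    quotientKerForm β hsymm (Submodule.Quotient.mk u) (Submodule.Quotient.mk v) = β u v :=
  rfl

theorem isSymmN_quotientKerForm (hsymm : IsSymmN β) : IsSymmN (quotientKerForm β hsymm) := by
  intro q r
  induction q using Submodule.Quotient.induction_on
  induction r using Submodule.Quotient.induction_on
  exact hsymm _ _

theorem isNondegN_quotientKerForm (hsymm : IsSymmN β) : IsNondegN (quotientKerForm β hsymm) := by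
  intro q hq
  induction q using Submodule.Quotient.induction_on with | _ u
  rw [Submodule.Quotient.mk_eq_zero, LinearMap.mem_ker]
  ext v
  exact hq (Submodule.Quotient.mk v)

end NLieQuotient

section NLieIdeal

variable {n : ℕ} {V : Type*} [AddCommGroup V] [Module ℝ V]

theorem comap_perpN_eq_ker (b : LinearMap.BilinForm ℝ V) (I : Submodule ℝ V) :
    (perpN b I).comap I.subtype = LinearMap.ker (b.compl₁₂ I.subtype I.subtype) := by
  ext u
  simp only [Submodule.mem_comap, LinearMap.mem_ker, LinearMap.ext_iff]
  exact ⟨fun h w => h w w.2, fun h w hw => h ⟨w, hw⟩⟩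

def restrictN (Φ : V [⋀^Fin n]→ₗ[ℝ] V) (I : Submodule ℝ V) (hI : IsIdealN Φ I) (hn : 0 < n) :
    I [⋀^Fin n]→ₗ[ℝ] I :=
  (Φ.compLinearMap I.subtype).codRestrict I fun y => hI _ ⟨0, hn⟩ (y _).2

theorem subtype_restrictN (Φ : V [⋀^Fin n]→ₗ[ℝ] V) (I : Submodule ℝ V) (hI : IsIdealN Φ I)
    (hn : 0 < n) (y : Fin n → I) : I.subtype (restrictN Φ I hI hn y) = Φ (I.subtype ∘ y) :=
  rfl

end NLieIdeal

theorem coisotropic_quotient_is_metric_general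
    (n : ℕ) (hn : 2 < n) (V : Type*) [AddCommGroup V] [Module ℝ V]
    (Φ : V [⋀^Fin n]→ₗ[ℝ] V) (hΦ : IsNJacobi Φ)
    (b : LinearMap.BilinForm ℝ V)
    (hsymm : IsSymmN b) (hinv : IsInvariantN Φ b)
    (I : Submodule ℝ V) (hI : IsIdealN Φ I) :
    ∃ (ΦW : (↥I ⧸ (perpN b I).comap I.subtype)
              [⋀^Fin n]→ₗ[ℝ] (↥I ⧸ (perpN b I).comap I.subtype))
      (bW : LinearMap.BilinForm ℝ (↥I ⧸ (perpN b I).comap I.subtype)),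
      (∀ (y : Fin n → ↥I) (z : ↥I), (z : V) = Φ (fun i => (y i : V)) →
        ΦW (fun i => Submodule.Quotient.mk (y i)) = Submodule.Quotient.mk z) ∧
      IsNJacobi ΦW ∧
      (∀ u v : ↥I,
        bW (Submodule.Quotient.mk u) (Submodule.Quotient.mk v) = b (u : V) (v : V)) ∧
      IsSymmN bW ∧ IsNondegN bW ∧ IsInvariantN ΦW bW := by
  rw [comap_perpN_eq_ker]
  set ΦI := restrictN Φ I hI (by omega)
  set bI := b.compl₁₂ I.subtype I.subtype
  have hΦI := subtype_restrictN Φ I hI (by omega)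
  have hsymmI : IsSymmN bI := fun u v => hsymm u v
  have hinvI : IsInvariantN ΦI bI := hinv.compl₁₂ hΦI
  obtain ⟨ΦW, hΦW⟩ := (isIdealN_ker hsymmI hinvI).exists_quotient
  refine ⟨ΦW, quotientKerForm bI hsymmI, fun y z hz => ?_,
    (hΦ.of_injective I.injective_subtype hΦI).of_surjective (Submodule.mkQ_surjective _) hΦW,
    quotientKerForm_mk hsymmI, isSymmN_quotientKerForm hsymmI, isNondegN_quotientKerForm hsymmI,
    hinvI.of_surjective (Submodule.mkQ_surjective _) hΦW (quotientKerForm_mk hsymmI)⟩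
  rw [show z = ΦI y from Subtype.ext hz]
  exact (hΦW y).symm

/-- if `I` is a coisotropic ideal (`I^⊥ ⊆ I`) of a metric Lie
`n`-algebra (`n > 2`), then `I/I^⊥` carries an induced `n`-bracket satisfying
the `n`-Jacobi identity and an induced nondegenerate invariant symmetric
bilinear form, i.e. it is a metric Lie `n`-algebra. -/
theorem coisotropic_quotient_is_metric
    (n : ℕ) (hn : 2 < n) (V : Type*) [AddCommGroup V] [Module ℝ V]
    [FiniteDimensional ℝ V]
    (Φ : V [⋀^Fin n]→ₗ[ℝ] V) (hΦ : IsNJacobi Φ)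
    (b : LinearMap.BilinForm ℝ V)
    (hsymm : IsSymmN b) (hnd : IsNondegN b) (hinv : IsInvariantN Φ b)
    (I : Submodule ℝ V) (hI : IsIdealN Φ I) (hco : perpN b I ≤ I) :
    ∃ (ΦW : (↥I ⧸ (perpN b I).comap I.subtype)
              [⋀^Fin n]→ₗ[ℝ] (↥I ⧸ (perpN b I).comap I.subtype))
      (bW : LinearMap.BilinForm ℝ (↥I ⧸ (perpN b I).comap I.subtype)),
      (∀ (y : Fin n → ↥I) (z : ↥I), (z : V) = Φ (fun i => (y i : V)) →
        ΦW (fun i => Submodule.Quotient.mk (y i)) = Submodule.Quotient.mk z) ∧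
      IsNJacobi ΦW ∧
      (∀ u v : ↥I,
        bW (Submodule.Quotient.mk u) (Submodule.Quotient.mk v) = b (u : V) (v : V)) ∧
      IsSymmN bW ∧ IsNondegN bW ∧ IsInvariantN ΦW bW :=
  coisotropic_quotient_is_metric_general n hn V Φ hΦ b hsymm hinv I hI
end

section
/- Let n > 2, let V be a metric Lie n-algebra and let I ⊴ V be an ideal. Then I^⊥ centralises I, that is, [I^⊥, I, V, …, V] = 0. -/
open scoped BigOperators

section MetricNLie

variable {n : ℕ} {V : Type*} [AddCommGroup V] [Module ℝ V] {Φ : V [⋀^Fin n]→ₗ[ℝ] V}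

theorem IsIdealN.apply_update_mem {I : Submodule ℝ V} (hI : IsIdealN Φ I) {y : Fin n → V}
    {i j : Fin n} (hij : i ≠ j) (hyj : y j ∈ I) (w : V) :
    Φ (Function.update y i w) ∈ I :=
  hI _ j (by rwa [Function.update_of_ne hij.symm])

theorem IsInvariantN.apply_eq_neg_apply_update {b : LinearMap.BilinForm ℝ V}
    (hinv : IsInvariantN Φ b) (y : Fin n → V) (i : Fin n) (w : V) :
    b (Φ y) w = - b (Φ (Function.update y i w)) (y i) := by
  simpa only [Function.update_eq_self] using hinv y i (y i) w

end MetricNLie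

theorem perp_centralises_ideal_general
    (n : ℕ) (V : Type*) [AddCommGroup V] [Module ℝ V]
    (Φ : V [⋀^Fin n]→ₗ[ℝ] V)
    (b : LinearMap.BilinForm ℝ V)
    (hsymm : IsSymmN b) (hnd : IsNondegN b) (hinv : IsInvariantN Φ b)
    (I : Submodule ℝ V) (hI : IsIdealN Φ I) :
    ∀ (y : Fin n → V) (i j : Fin n), i ≠ j →
      y i ∈ perpN b I → y j ∈ I → Φ y = 0 := by
  intro y i j hij hyi hyj
  refine hnd _ fun w => ?_
  have hperp : b (Φ (Function.update y i w)) (y i) = 0 := by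
    rw [hsymm]
    exact hyi _ (hI.apply_update_mem hij hyj w)
  rw [hinv.apply_eq_neg_apply_update y i w, hperp, neg_zero]

/-- in a metric Lie `n`-algebra (`n > 2`), `I^⊥` centralises the
ideal `I`: every `n`-bracket with one argument in `I^⊥` and another in `I`
vanishes. -/
theorem perp_centralises_ideal
    (n : ℕ) (hn : 2 < n) (V : Type*) [AddCommGroup V] [Module ℝ V]
    [FiniteDimensional ℝ V]
    (Φ : V [⋀^Fin n]→ₗ[ℝ] V) (hΦ : IsNJacobi Φ)
    (b : LinearMap.BilinForm ℝ V)
    (hsymm : IsSymmN b) (hnd : IsNondegN b) (hinv : IsInvariantN Φ b)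
    (I : Submodule ℝ V) (hI : IsIdealN Φ I) :
    ∀ (y : Fin n → V) (i j : Fin n), i ≠ j →
      y i ∈ perpN b I → y j ∈ I → Φ y = 0 :=
  perp_centralises_ideal_general n V Φ b hsymm hnd hinv I hI
end
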